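/- Let G be a connected graph of order n. Then edim(G) ≥ n-2 if and only if for every triple of vertices from V(G) there exists an ordering v_1, v_2, v_3 of the triple such that either (1) v_3 is adjacent to both v_1 and v_2 and every non-mutual neighbor of v_1, v_2 is adjacent to v_3, or (2) there exists u ∈ V(G)∖{v_1,v_2,v_3} adjacent to both v_1 and v_2 such that every non-mutual neighbor of v_1, v_2 in V(G)∖{v_1,v_2,v_3} is adjacent to u, and every x ∈ V(G)∖{v_1,v_2,v_3} with d(x,v_2) > d(x,v_1) = 2 or d(x,v_1) > d(x,v_2) = 2 satisfies d(x,u) ≤ 2. -/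

import Mathlib

/-!
Resolving sets are closed upwards and `edgeMetricDim` is attained, so `n - 2 ≤ edim G` says
exactly that no set `V ∖ T` with `|T| = 3` resolves the edges. A vertex outside `T` is at
distance `0` from an edge only if it lies on it, so two edges not resolved by `V ∖ T` share an
endpoint `w` and their other endpoints `v₁ ≠ v₂` lie in `T`; they are not resolved iff
`min (d x w) (d x v₁) = min (d x w) (d x v₂)` for every `x ∉ T`. Condition (1) is the case
`w = v₃ ∈ T` and condition (2) the case `w = u ∉ T`. The equality at `x` yields the conditions
at `x` directly; conversely, the conditions at distance 1 and 2 propagate to every `x` along a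
geodesic towards the closer of `v₁, v₂`, whose vertices at distance 1 and 2 from that end cannot
both be `v₃`.
-/

open SimpleGraph Finset

/-- Distance from an edge (as an unordered pair) to a vertex: the minimum
of the distances from the two endpoints. -/
noncomputable def edgeVertexDist {V : Type*} (G : SimpleGraph V) (e : Sym2 V) (v : V) : ℕ :=
  Sym2.lift ⟨fun x y => min (G.dist x v) (G.dist y v), fun x y => by
    simp [min_comm]⟩ e

/-- `S` is a resolving set for the vertices of `G`. -/
def IsResolvingSet {V : Type*} (G : SimpleGraph V) (S : Set V) : Prop :=
  ∀ u w : V, (∀ s ∈ S, G.dist u s = G.dist w s) → u = w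

/-- `S` is a resolving set for the edges of `G`. -/
def IsEdgeResolvingSet {V : Type*} (G : SimpleGraph V) (S : Set V) : Prop :=
  ∀ e ∈ G.edgeSet, ∀ f ∈ G.edgeSet,
    (∀ s ∈ S, edgeVertexDist G e s = edgeVertexDist G f s) → e = f

/-- The metric dimension of `G`. -/
noncomputable def metricDim {V : Type*} (G : SimpleGraph V) : ℕ :=
  sInf {k | ∃ S : Finset V, S.card = k ∧ IsResolvingSet G (S : Set V)}

/-- The edge metric dimension of `G`. -/
noncomputable def edgeMetricDim {V : Type*} (G : SimpleGraph V) : ℕ :=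
  sInf {k | ∃ S : Finset V, S.card = k ∧ IsEdgeResolvingSet G (S : Set V)}

lemma min_eq_min_of_lt_imp_le {α : Type*} [LinearOrder α] {a b c : α} (h₁ : a < b → c ≤ a)
    (h₂ : b < a → c ≤ b) : min c a = min c b := by
  rcases lt_trichotomy a b with h | rfl | h
  · rw [min_eq_left (h₁ h), min_eq_left ((h₁ h).trans h.le)]
  · rfl
  · rw [min_eq_left (h₂ h), min_eq_left ((h₂ h).trans h.le)]

lemma Set.exists_insert_insert_singleton_eq {α : Type*} {a b c p q : α}
    (hp : p ∈ ({a, b, c} : Set α)) (hq : q ∈ ({a, b, c} : Set α)) (hpq : p ≠ q) :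
    ∃ r, ({p, q, r} : Set α) = {a, b, c} := by
  simp only [Set.mem_insert_iff, Set.mem_singleton_iff] at hp hq
  rcases hp with rfl | rfl | rfl <;> rcases hq with rfl | rfl | rfl <;>
    first
    | exact absurd rfl hpq
    | exact ⟨c, by grind⟩
    | exact ⟨b, by grind⟩
    | exact ⟨a, by grind⟩

lemma Set.ne_of_insert_insert_singleton_eq {α : Type*} {a b c x y z : α} (hab : a ≠ b)
    (hac : a ≠ c) (hbc : b ≠ c) (h : ({x, y, z} : Set α) = {a, b, c}) : x ≠ y := by
  rintro rfl
  have ha : a ∈ ({x, x, z} : Set α) := h ▸ by simp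
  have hb : b ∈ ({x, x, z} : Set α) := h ▸ by simp
  have hc : c ∈ ({x, x, z} : Set α) := h ▸ by simp
  simp only [Set.mem_insert_iff, Set.mem_singleton_iff] at ha hb hc
  grind

namespace SimpleGraph

variable {V : Type*} {G : SimpleGraph V}

lemma Connected.exists_dist_add_dist_eq (hG : G.Connected) {x v : V} {j : ℕ}
    (hj : j ≤ G.dist x v) : ∃ y, G.dist x y + j = G.dist x v ∧ G.dist y v = j := by
  obtain ⟨p, hp⟩ := hG.exists_walk_length_eq_dist x v
  refine ⟨p.getVert (G.dist x v - j), ?_⟩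
  have hxy := dist_le (p.take (G.dist x v - j))
  have hyv := dist_le (p.drop (G.dist x v - j))
  have := hG.dist_triangle (u := x) (v := p.getVert (G.dist x v - j)) (w := v)
  rw [Walk.take_length] at hxy
  rw [Walk.drop_length] at hyv
  omega

def IsNonMutualNeighbor (G : SimpleGraph V) (u v x : V) : Prop :=
  (G.Adj x u ∧ ¬G.Adj x v) ∨ (G.Adj x v ∧ ¬G.Adj x u)

/-- Condition (1) for the ordered triple `v₁, v₂, v₃`. -/
def DominatesNonMutualNeighbors (G : SimpleGraph V) (v₁ v₂ v₃ : V) : Prop :=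
  G.Adj v₁ v₃ ∧ G.Adj v₂ v₃ ∧ ∀ x, G.IsNonMutualNeighbor v₁ v₂ x → G.Adj x v₃

/-- Condition (2) for the ordered triple `v₁, v₂, v₃`, witnessed by `u`. -/
def IsExternalDominator (G : SimpleGraph V) (v₁ v₂ v₃ u : V) : Prop :=
  u ∉ ({v₁, v₂, v₃} : Set V) ∧ G.Adj u v₁ ∧ G.Adj u v₂ ∧
    (∀ x, x ∉ ({v₁, v₂, v₃} : Set V) → G.IsNonMutualNeighbor v₁ v₂ x → G.Adj x u) ∧
    (∀ x, x ∉ ({v₁, v₂, v₃} : Set V) →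
      ((G.dist x v₁ < G.dist x v₂ ∧ G.dist x v₁ = 2) ∨
        (G.dist x v₂ < G.dist x v₁ ∧ G.dist x v₂ = 2)) → G.dist x u ≤ 2)

end SimpleGraph

section EdgeResolvingSet

variable {V : Type*} {G : SimpleGraph V}

lemma edgeVertexDist_mk (x y v : V) :
    edgeVertexDist G s(x, y) v = min (G.dist v x) (G.dist v y) := by
  simp only [edgeVertexDist, Sym2.lift_mk, dist_comm]

lemma SimpleGraph.Connected.edgeVertexDist_eq_zero_iff (hG : G.Connected) {e : Sym2 V} {v : V} :
    edgeVertexDist G e v = 0 ↔ v ∈ e := by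
  induction e using Sym2.ind with
  | h x y => rw [edgeVertexDist_mk, Nat.min_eq_zero_iff, hG.dist_eq_zero_iff,
      hG.dist_eq_zero_iff, Sym2.mem_iff]

lemma IsEdgeResolvingSet.mono {S T : Set V} (hST : S ⊆ T) (h : IsEdgeResolvingSet G S) :
    IsEdgeResolvingSet G T :=
  fun e he f hf heq => h e he f hf fun s hs => heq s (hST hs)

lemma SimpleGraph.Connected.isEdgeResolvingSet_univ (hG : G.Connected) :
    IsEdgeResolvingSet G (Set.univ : Set V) := by
  intro e he f hf heq
  induction e using Sym2.ind with
  | h x y =>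
    have hmem : ∀ v ∈ s(x, y), v ∈ f := fun v hv =>
      hG.edgeVertexDist_eq_zero_iff.mp <|
        (heq v (Set.mem_univ v)).symm.trans (hG.edgeVertexDist_eq_zero_iff.mpr hv)
    exact ((Sym2.mem_and_mem_iff (G.ne_of_adj he)).mp
      ⟨hmem x (Sym2.mem_mk_left x y), hmem y (Sym2.mem_mk_right x y)⟩).symm

lemma card_sub_le_edgeMetricDim_iff [Fintype V] (hG : G.Connected) (k : ℕ) :
    Fintype.card V - k ≤ edgeMetricDim G ↔
      ∀ T : Finset V, T.card = k + 1 → ¬IsEdgeResolvingSet G (↑T : Set V)ᶜ := by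
  classical
  constructor
  · intro hle T hT hres
    have hcard : edgeMetricDim G ≤ Fintype.card V - (k + 1) :=
      Nat.sInf_le ⟨Tᶜ, by rw [Finset.card_compl, hT], by rwa [Finset.coe_compl]⟩
    have := hT ▸ T.card_le_univ
    omega
  · intro h
    by_contra! hlt
    obtain ⟨S, hS, hSres⟩ : edgeMetricDim G ∈
        {k | ∃ S : Finset V, S.card = k ∧ IsEdgeResolvingSet G (S : Set V)} :=
      Nat.sInf_mem ⟨_, Finset.univ, rfl, by simpa using hG.isEdgeResolvingSet_univ⟩
    obtain ⟨T, hTS, hT⟩ : ∃ T ⊆ Sᶜ, T.card = k + 1 :=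
      Finset.exists_subset_card_eq (by rw [Finset.card_compl]; omega)
    refine h T hT (hSres.mono ?_)
    rw [Set.subset_compl_comm, ← Finset.coe_compl]
    exact Finset.coe_subset.mpr hTS

lemma not_isEdgeResolvingSet_compl_of_min_dist_eq {T : Set V} {p q w : V} (hpq : p ≠ q)
    (hwp : G.Adj w p) (hwq : G.Adj w q)
    (h : ∀ x ∉ T, min (G.dist x w) (G.dist x p) = min (G.dist x w) (G.dist x q)) :
    ¬IsEdgeResolvingSet G Tᶜ := fun hres =>
  hpq <| Sym2.congr_right.mp <| hres _ hwp _ hwq fun x hx => by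
    rw [edgeVertexDist_mk, edgeVertexDist_mk]
    exact h x hx

end EdgeResolvingSet

namespace SimpleGraph

variable {V : Type*} {G : SimpleGraph V}

section Backward

variable (hG : G.Connected)
include hG

lemma Connected.dist_le_of_forall_adj {p q w x : V}
    (hnm : ∀ y, G.Adj y p → ¬G.Adj y q → G.Adj y w) (hxp : x ≠ p)
    (hlt : G.dist x p < G.dist x q) : G.dist x w ≤ G.dist x p := by
  obtain ⟨y, hxy, hyp⟩ := hG.exists_dist_add_dist_eq (hG.pos_dist_of_ne hxp)
  have hyq : ¬G.Adj y q := fun h => by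
    have := hG.dist_triangle (u := x) (v := y) (w := q)
    rw [dist_eq_one_iff_adj.mpr h] at this
    omega
  have := hG.dist_triangle (u := x) (v := y) (w := w)
  rw [dist_eq_one_iff_adj.mpr (hnm y (dist_eq_one_iff_adj.mp hyp) hyq)] at this
  omega

lemma Connected.dist_le_of_forall_not_mem {p q r w x : V}
    (hnm : ∀ y ∉ ({p, q, r} : Set V), G.Adj y p → ¬G.Adj y q → G.Adj y w)
    (htwo : ∀ y ∉ ({p, q, r} : Set V), G.dist y p < G.dist y q → G.dist y p = 2 →
      G.dist y w ≤ 2)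
    (hx : x ∉ ({p, q, r} : Set V)) (hlt : G.dist x p < G.dist x q) :
    G.dist x w ≤ G.dist x p := by
  simp only [Set.mem_insert_iff, Set.mem_singleton_iff, not_or] at hx
  obtain ⟨hxp, -, hxr⟩ := hx
  -- Of the vertices at distance 1 and 2 from `p` on a geodesic from `x`, one avoids `r`.
  have hwit : ∀ y, y ≠ r → G.dist x y + G.dist y p = G.dist x p →
      G.dist y p = 1 ∨ G.dist y p = 2 → G.dist x w ≤ G.dist x p := by
    intro y hyr hy hyp
    have hyq : G.dist y p < G.dist y q := by
      have := hG.dist_triangle (u := x) (v := y) (w := q)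
      omega
    have hyT : y ∉ ({p, q, r} : Set V) := by
      simp only [Set.mem_insert_iff, Set.mem_singleton_iff, not_or]
      refine ⟨?_, ?_, hyr⟩ <;> rintro rfl <;> simp at hyp hyq
    have hyw : G.dist y w ≤ G.dist y p := by
      rcases hyp with hyp | hyp
      · have hyq' : ¬G.Adj y q := fun h => by rw [dist_eq_one_iff_adj.mpr h] at hyq; omega
        rw [hyp, dist_eq_one_iff_adj.mpr (hnm y hyT (dist_eq_one_iff_adj.mp hyp) hyq')]
      · exact hyp ▸ htwo y hyT hyq hyp
    have := hG.dist_triangle (u := x) (v := y) (w := w)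
    omega
  have hpos := hG.pos_dist_of_ne hxp
  by_cases h1 : G.dist x p = 1
  · exact hwit x hxr (by simp) (Or.inl h1)
  obtain ⟨y, hy, hyp⟩ := hG.exists_dist_add_dist_eq (j := 1) hpos
  obtain ⟨z, hz, hzp⟩ := hG.exists_dist_add_dist_eq (x := x) (v := p) (j := 2) (by omega)
  have hyz : y ≠ z := by rintro rfl; omega
  by_cases hyr : y = r
  · exact hwit z (hyr ▸ hyz.symm) (by omega) (Or.inr hzp)
  · exact hwit y hyr (by omega) (Or.inl hyp)

lemma Connected.min_dist_eq_of_dominatesNonMutualNeighbors {p q r x : V}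
    (h : G.DominatesNonMutualNeighbors p q r) (hxp : x ≠ p) (hxq : x ≠ q) :
    min (G.dist x r) (G.dist x p) = min (G.dist x r) (G.dist x q) :=
  min_eq_min_of_lt_imp_le
    (hG.dist_le_of_forall_adj (fun y h₁ h₂ => h.2.2 y (.inl ⟨h₁, h₂⟩)) hxp)
    (hG.dist_le_of_forall_adj (fun y h₁ h₂ => h.2.2 y (.inr ⟨h₁, h₂⟩)) hxq)

lemma Connected.min_dist_eq_of_isExternalDominator {p q r u x : V}
    (h : G.IsExternalDominator p q r u) (hx : x ∉ ({p, q, r} : Set V)) :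
    min (G.dist x u) (G.dist x p) = min (G.dist x u) (G.dist x q) := by
  obtain ⟨-, -, -, hnm, htwo⟩ := h
  have hswap : ({q, p, r} : Set V) = {p, q, r} := Set.insert_comm q p {r}
  exact min_eq_min_of_lt_imp_le
    (hG.dist_le_of_forall_not_mem (fun y hy h₁ h₂ => hnm y hy (.inl ⟨h₁, h₂⟩))
      (fun y hy h₁ h₂ => htwo y hy (.inl ⟨h₁, h₂⟩)) hx)
    (hG.dist_le_of_forall_not_mem (fun y hy h₁ h₂ => hnm y (hswap ▸ hy) (.inr ⟨h₁, h₂⟩))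
      (fun y hy h₁ h₂ => htwo y (hswap ▸ hy) (.inr ⟨h₁, h₂⟩)) (hswap ▸ hx))

lemma Connected.not_isEdgeResolvingSet_compl_of_dominates_or_isExternalDominator {p q r : V}
    (hpq : p ≠ q)
    (h : G.DominatesNonMutualNeighbors p q r ∨ ∃ u, G.IsExternalDominator p q r u) :
    ¬IsEdgeResolvingSet G ({p, q, r} : Set V)ᶜ := by
  rcases h with h | ⟨u, h⟩
  · refine not_isEdgeResolvingSet_compl_of_min_dist_eq hpq h.1.symm h.2.1.symm fun x hx => ?_
    simp only [Set.mem_insert_iff, Set.mem_singleton_iff, not_or] at hx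
    exact hG.min_dist_eq_of_dominatesNonMutualNeighbors h hx.1 hx.2.1
  · exact not_isEdgeResolvingSet_compl_of_min_dist_eq hpq h.2.1 h.2.2.1 fun x hx =>
      hG.min_dist_eq_of_isExternalDominator h hx

end Backward

section Forward

variable (hG : G.Connected)
include hG

lemma Connected.exists_adj_adj_of_not_isEdgeResolvingSet_compl {a b c : V}
    (h : ¬IsEdgeResolvingSet G ({a, b, c} : Set V)ᶜ) :
    ∃ w p q, p ∈ ({a, b, c} : Set V) ∧ q ∈ ({a, b, c} : Set V) ∧ p ≠ q ∧
      G.Adj w p ∧ G.Adj w q ∧ ∀ x ∉ ({a, b, c} : Set V),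
        min (G.dist x w) (G.dist x p) = min (G.dist x w) (G.dist x q) := by
  simp only [IsEdgeResolvingSet, not_forall] at h
  obtain ⟨e, he, f, hf, heq, hne⟩ := h
  have hmem : ∀ v ∉ ({a, b, c} : Set V), v ∈ e → v ∈ f := fun v hv hve => by
    rwa [← hG.edgeVertexDist_eq_zero_iff, ← heq v hv, hG.edgeVertexDist_eq_zero_iff]
  have hmem' : ∀ v ∉ ({a, b, c} : Set V), v ∈ f → v ∈ e := fun v hv hvf => by
    rwa [← hG.edgeVertexDist_eq_zero_iff, heq v hv, hG.edgeVertexDist_eq_zero_iff]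
  by_cases hshared : ∃ w, w ∈ e ∧ w ∈ f
  · obtain ⟨w, hwe, hwf⟩ := hshared
    obtain ⟨p, rfl⟩ := Sym2.mem_iff_exists.mp hwe
    obtain ⟨q, rfl⟩ := Sym2.mem_iff_exists.mp hwf
    have hwp : G.Adj w p := he
    have hwq : G.Adj w q := hf
    have hpq : p ≠ q := fun h => hne (h ▸ rfl)
    have hp : p ∈ ({a, b, c} : Set V) := by
      by_contra hp
      rcases Sym2.mem_iff.mp (hmem p hp (Sym2.mem_mk_right w p)) with h | h
      exacts [hwp.ne h.symm, hpq h]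
    have hq : q ∈ ({a, b, c} : Set V) := by
      by_contra hq
      rcases Sym2.mem_iff.mp (hmem' q hq (Sym2.mem_mk_right w q)) with h | h
      exacts [hwq.ne h.symm, hpq h.symm]
    exact ⟨w, p, q, hp, hq, hpq, hwp, hwq, fun x hx => by
      simpa only [edgeVertexDist_mk] using heq x hx⟩
  -- Otherwise the two edges have four distinct endpoints, all in `{a, b, c}`.
  simp only [not_exists, not_and] at hshared
  exfalso
  have hin : ∀ v, v ∈ e → v ∈ ({a, b, c} : Set V) := fun v hve => by
    by_contra hv
    exact hshared v hve (hmem v hv hve)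
  have hin' : ∀ v, v ∈ f → v ∈ ({a, b, c} : Set V) := fun v hvf => by
    by_contra hv
    exact hshared v (hmem' v hv hvf) hvf
  induction e using Sym2.ind with | h p₁ p₂ =>
  induction f using Sym2.ind with | h q₁ q₂ =>
  have := hin p₁ (Sym2.mem_mk_left _ _)
  have := hin p₂ (Sym2.mem_mk_right _ _)
  have := hin' q₁ (Sym2.mem_mk_left _ _)
  have := hin' q₂ (Sym2.mem_mk_right _ _)
  have := G.ne_of_adj he
  have := G.ne_of_adj hf
  simp only [Sym2.mem_iff, Set.mem_insert_iff, Set.mem_singleton_iff] at *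
  grind

lemma Connected.adj_of_min_dist_eq {p q w x : V} (hwq : G.Adj w q)
    (heq : min (G.dist x w) (G.dist x p) = min (G.dist x w) (G.dist x q)) (hxq : x ≠ q)
    (hxp : G.Adj x p) (hxq' : ¬G.Adj x q) : G.Adj x w := by
  by_contra hxw
  have hxw' : x ≠ w := by rintro rfl; exact hxq' hwq
  have := hG.one_lt_dist_of_ne_of_not_adj hxq hxq'
  have := hG.one_lt_dist_of_ne_of_not_adj hxw' hxw
  rw [dist_eq_one_iff_adj.mpr hxp] at heq
  omega

lemma Connected.adj_of_isNonMutualNeighbor_of_min_dist_eq {p q w x : V} (hwp : G.Adj w p)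
    (hwq : G.Adj w q) (heq : min (G.dist x w) (G.dist x p) = min (G.dist x w) (G.dist x q))
    (hxp : x ≠ p) (hxq : x ≠ q) (hx : G.IsNonMutualNeighbor p q x) : G.Adj x w :=
  hx.elim (fun h => hG.adj_of_min_dist_eq hwq heq hxq h.1 h.2)
    (fun h => hG.adj_of_min_dist_eq hwp heq.symm hxp h.1 h.2)

lemma Connected.dominatesNonMutualNeighbors_of_min_dist_eq {p q w : V} (hwp : G.Adj w p)
    (hwq : G.Adj w q) (h : ∀ x ∉ ({p, q, w} : Set V),
      min (G.dist x w) (G.dist x p) = min (G.dist x w) (G.dist x q)) :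
    G.DominatesNonMutualNeighbors p q w := by
  refine ⟨hwp.symm, hwq.symm, fun x hx => ?_⟩
  by_cases hxT : x ∈ ({p, q, w} : Set V)
  · simp only [Set.mem_insert_iff, Set.mem_singleton_iff] at hxT
    rcases hxT with rfl | rfl | rfl
    · exact hwp.symm
    · exact hwq.symm
    · exact (hx.elim (fun h => h.2 hwq) fun h => h.2 hwp).elim
  · simp only [Set.mem_insert_iff, Set.mem_singleton_iff, not_or] at hxT
    exact hG.adj_of_isNonMutualNeighbor_of_min_dist_eq hwp hwq (h x (by simpa using hxT))
      hxT.1 hxT.2.1 hx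

lemma Connected.isExternalDominator_of_min_dist_eq {p q r w : V}
    (hw : w ∉ ({p, q, r} : Set V)) (hwp : G.Adj w p) (hwq : G.Adj w q)
    (h : ∀ x ∉ ({p, q, r} : Set V),
      min (G.dist x w) (G.dist x p) = min (G.dist x w) (G.dist x q)) :
    G.IsExternalDominator p q r w := by
  refine ⟨hw, hwp, hwq, fun x hx hnm => ?_, fun x hx htwo => ?_⟩
  · have hxpq : x ≠ p ∧ x ≠ q := by simp_all
    exact hG.adj_of_isNonMutualNeighbor_of_min_dist_eq hwp hwq (h x hx) hxpq.1 hxpq.2 hnm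
  · have := h x hx
    omega

lemma Connected.exists_of_not_isEdgeResolvingSet_compl {a b c : V}
    (h : ¬IsEdgeResolvingSet G ({a, b, c} : Set V)ᶜ) :
    ∃ v₁ v₂ v₃, ({v₁, v₂, v₃} : Set V) = {a, b, c} ∧
      (G.DominatesNonMutualNeighbors v₁ v₂ v₃ ∨ ∃ u, G.IsExternalDominator v₁ v₂ v₃ u) := by
  obtain ⟨w, p, q, hp, hq, hpq, hwp, hwq, hmin⟩ :=
    hG.exists_adj_adj_of_not_isEdgeResolvingSet_compl h
  obtain ⟨r, hr⟩ := Set.exists_insert_insert_singleton_eq hp hq hpq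
  rw [← hr] at hmin
  refine ⟨p, q, r, hr, ?_⟩
  by_cases hw : w ∈ ({p, q, r} : Set V)
  · have hwr : w = r := by
      simp only [Set.mem_insert_iff, Set.mem_singleton_iff] at hw
      exact hw.resolve_left hwp.ne |>.resolve_left hwq.ne
    subst hwr
    exact .inl (hG.dominatesNonMutualNeighbors_of_min_dist_eq hwp hwq hmin)
  · exact .inr ⟨w, hG.isExternalDominator_of_min_dist_eq hw hwp hwq hmin⟩

end Forward

end SimpleGraph

/-- Characterization of connected `n`-vertex graphs with `edim(G) ≥ n - 2`. -/
theorem stmt_17 {V : Type*} [Fintype V] (G : SimpleGraph V) (hG : G.Connected) :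
    Fintype.card V - 2 ≤ edgeMetricDim G ↔
      ∀ a b c : V, a ≠ b → a ≠ c → b ≠ c →
        ∃ v₁ v₂ v₃ : V, ({v₁, v₂, v₃} : Set V) = {a, b, c} ∧
          ((G.Adj v₁ v₃ ∧ G.Adj v₂ v₃ ∧
              ∀ x : V, ((G.Adj x v₁ ∧ ¬G.Adj x v₂) ∨ (G.Adj x v₂ ∧ ¬G.Adj x v₁)) →
                G.Adj x v₃) ∨
            (∃ u : V, u ∉ ({v₁, v₂, v₃} : Set V) ∧ G.Adj u v₁ ∧ G.Adj u v₂ ∧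
              (∀ x : V, x ∉ ({v₁, v₂, v₃} : Set V) →
                ((G.Adj x v₁ ∧ ¬G.Adj x v₂) ∨ (G.Adj x v₂ ∧ ¬G.Adj x v₁)) →
                G.Adj x u) ∧
              (∀ x : V, x ∉ ({v₁, v₂, v₃} : Set V) →
                ((G.dist x v₁ < G.dist x v₂ ∧ G.dist x v₁ = 2) ∨
                  (G.dist x v₂ < G.dist x v₁ ∧ G.dist x v₂ = 2)) →
                G.dist x u ≤ 2))) := by
  classical
  rw [card_sub_le_edgeMetricDim_iff hG 2]
  constructor
  · intro h a b c hab hac hbc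
    have hT := h {a, b, c} (Finset.card_eq_three.mpr ⟨a, b, c, hab, hac, hbc, rfl⟩)
    push_cast at hT
    exact hG.exists_of_not_isEdgeResolvingSet_compl hT
  · intro h T hT
    obtain ⟨a, b, c, hab, hac, hbc, rfl⟩ := Finset.card_eq_three.mp hT
    obtain ⟨v₁, v₂, v₃, hv, hcond⟩ := h a b c hab hac hbc
    push_cast
    rw [← hv]
    exact hG.not_isEdgeResolvingSet_compl_of_dominates_or_isExternalDominator
      (Set.ne_of_insert_insert_singleton_eq hab hac hbc hv) hcond
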